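/- arXiv:2603.10736 — 4 statements merged into one kernel-verified Lean document; each statement's English description precedes it below -/
import Mathlib

section
/- Every vertex decomposable simplicial complex is vertex dismissible. -/
/-- A simplicial complex: a collection of finite sets closed under taking subsets. -/
def IsComplex {α : Type*} (Δ : Set (Finset α)) : Prop :=
  ∀ F ∈ Δ, ∀ G : Finset α, G ⊆ F → G ∈ Δ

/-- A facet: a maximal face of `Δ`. -/
def IsFacet {α : Type*} (Δ : Set (Finset α)) (F : Finset α) : Prop :=
  F ∈ Δ ∧ ∀ G ∈ Δ, F ⊆ G → G = F

/-- The initial dimension `mdim Δ`: the minimum dimension (= card − 1) of a facet of `Δ`. -/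
noncomputable def mdim {α : Type*} (Δ : Set (Finset α)) : ℤ :=
  ((sInf {n : ℕ | ∃ F, IsFacet Δ F ∧ F.card = n} : ℕ) : ℤ) - 1

/-- The dimension `dimc Δ`: the maximum dimension (= card − 1) of a face of `Δ`. -/
noncomputable def dimc {α : Type*} (Δ : Set (Finset α)) : ℤ :=
  ((sSup {n : ℕ | ∃ F ∈ Δ, F.card = n} : ℕ) : ℤ) - 1

/-- A complex is pure if its initial dimension equals its dimension. -/
def IsPure {α : Type*} (Δ : Set (Finset α)) : Prop := mdim Δ = dimc Δ

/-- Deletion of a vertex: `del_Δ(x) = {F ∈ Δ : x ∉ F}`. -/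
def del {α : Type*} (Δ : Set (Finset α)) (x : α) : Set (Finset α) :=
  {F ∈ Δ | x ∉ F}

/-- Link of a vertex: `link_Δ(x) = {F \ {x} : x ∈ F ∈ Δ}`. -/
def link {α : Type*} [DecidableEq α] (Δ : Set (Finset α)) (x : α) : Set (Finset α) :=
  {G | ∃ F ∈ Δ, x ∈ F ∧ G = F \ {x}}

/-- A shedding vertex: every facet containing `x` is covered by a facet avoiding `x`. -/
def IsShedding {α : Type*} [DecidableEq α] (Δ : Set (Finset α)) (x : α) : Prop :=
  ∀ F, IsFacet Δ F → x ∈ F → ∃ F', IsFacet Δ F' ∧ x ∉ F' ∧ F \ {x} ⊆ F'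

/-- A dismissing vertex: `mdim del_Δ(x) ≥ mdim Δ`. -/
def IsDismissing {α : Type*} (Δ : Set (Finset α)) (x : α) : Prop :=
  mdim Δ ≤ mdim (del Δ x)

/-- A simplex: the collection of all subsets of a finite set (possibly empty). -/
def IsSimplexSet {α : Type*} (Δ : Set (Finset α)) : Prop :=
  ∃ F : Finset α, Δ = {G : Finset α | G ⊆ F}

/-- The pure `k`-skeleton: all faces contained in some `k`-dimensional face of `Δ`. -/
def pureSkeleton {α : Type*} (Δ : Set (Finset α)) (k : ℤ) : Set (Finset α) :=
  {F | ∃ G ∈ Δ, F ⊆ G ∧ (G.card : ℤ) = k + 1}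

/-- Vertex decomposable complexes. -/
inductive VertexDecomposable {α : Type*} [DecidableEq α] : Set (Finset α) → Prop
  | simplex {Δ : Set (Finset α)} : IsSimplexSet Δ → VertexDecomposable Δ
  | shed {Δ : Set (Finset α)} (x : α) : IsShedding Δ x →
      VertexDecomposable (del Δ x) → VertexDecomposable (link Δ x) →
      VertexDecomposable Δ

/-- Vertex dismissible complexes. -/
inductive VertexDismissible {α : Type*} [DecidableEq α] : Set (Finset α) → Prop
  | simplex {Δ : Set (Finset α)} : IsSimplexSet Δ → VertexDismissible Δ
  | dismiss {Δ : Set (Finset α)} (x : α) : IsDismissing Δ x →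
      VertexDismissible (del Δ x) → VertexDismissible (link Δ x) →
      VertexDismissible Δ

/-- `⟨F⟩`: the simplex on the finite set `F`. -/
def faceSimplex {α : Type*} (F : Finset α) : Set (Finset α) := {G : Finset α | G ⊆ F}

/-- A shelling order: an ordering `F_0, …, F_{q-1}` of the facets of `Δ` such that for `j ≥ 1`
the complex `⟨F_j⟩ ∩ ⋃_{i<j} ⟨F_i⟩` is pure of dimension `dim F_j − 1`. -/
def IsShellingOrder {α : Type*} (Δ : Set (Finset α)) {q : ℕ} (F : Fin q → Finset α) : Prop :=
  Function.Injective F ∧ (∀ G, IsFacet Δ G ↔ ∃ i, F i = G) ∧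
  ∀ j : Fin q, 0 < (j : ℕ) → ∀ G,
    IsFacet (faceSimplex (F j) ∩ ⋃ (i : Fin q) (_ : i < j), faceSimplex (F i)) G →
    (G.card : ℤ) = (F j).card - 1

/-- A complex is shellable if its facets admit a shelling order. -/
def Shellable {α : Type*} (Δ : Set (Finset α)) : Prop :=
  ∃ (q : ℕ) (F : Fin q → Finset α), IsShellingOrder Δ F

/-- A scaling order: an ordering `F_0, …, F_{q-1}` of the facets of `Δ` such that for `j ≥ 1`
the complex `Δ_j = ⟨F_j⟩ ∩ ⋃_{i<j} ⟨F_i⟩` satisfies `mdim Δ_j ≥ mdim Δ − 1`. -/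
def IsScalingOrder {α : Type*} (Δ : Set (Finset α)) {q : ℕ} (F : Fin q → Finset α) : Prop :=
  Function.Injective F ∧ (∀ G, IsFacet Δ G ↔ ∃ i, F i = G) ∧
  ∀ j : Fin q, 0 < (j : ℕ) →
    mdim Δ - 1 ≤ mdim (faceSimplex (F j) ∩ ⋃ (i : Fin q) (_ : i < j), faceSimplex (F i))

/-- A complex is scalable if its facets admit a scaling order. -/
def Scalable {α : Type*} (Δ : Set (Finset α)) : Prop :=
  ∃ (q : ℕ) (F : Fin q → Finset α), IsScalingOrder Δ F

lemma del_isComplex {α : Type*} {Δ : Set (Finset α)} (h : IsComplex Δ) (x : α) :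
    IsComplex (del Δ x) := by
  intro F hF G hG
  exact ⟨h F hF.1 G hG, fun hx => hF.2 (hG hx)⟩

lemma link_isComplex {α : Type*} [DecidableEq α] {Δ : Set (Finset α)} (h : IsComplex Δ) (x : α) :
    IsComplex (link Δ x) := by
  rintro F ⟨F', hF', hxF', rfl⟩ G hG
  have hxG : x ∉ G := fun hx => by
    have := hG hx
    simp [Finset.mem_sdiff] at this
  refine ⟨insert x G, h F' hF' _ ?_, Finset.mem_insert_self x G, ?_⟩
  · intro a ha
    rcases Finset.mem_insert.1 ha with rfl | ha
    · exact hxF'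
    · exact (Finset.mem_sdiff.1 (hG ha)).1
  · rw [Finset.sdiff_singleton_eq_erase, Finset.erase_insert hxG]

lemma del_finite {α : Type*} {Δ : Set (Finset α)} (h : Δ.Finite) (x : α) :
    (del Δ x).Finite := h.subset fun _ hF => hF.1

lemma link_finite {α : Type*} [DecidableEq α] {Δ : Set (Finset α)} (h : Δ.Finite) (x : α) :
    (link Δ x).Finite := by
  refine (h.image (fun F => F \ {x})).subset ?_
  rintro G ⟨F, hF, _, rfl⟩
  exact ⟨F, hF, rfl⟩

lemma exists_facet_superset {α : Type*} {Δ : Set (Finset α)} (hfin : Δ.Finite)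
    {F : Finset α} (hF : F ∈ Δ) : ∃ G, IsFacet Δ G ∧ F ⊆ G := by
  obtain ⟨G, hG, hmax⟩ := Set.Finite.exists_maximalFor id {H ∈ Δ | F ⊆ H}
    (hfin.subset fun _ h => h.1) ⟨F, hF, subset_rfl⟩
  exact ⟨G, ⟨hG.1, fun H hH hGH => Finset.Subset.antisymm (hmax ⟨hH, hG.2.trans hGH⟩ hGH) hGH⟩, hG.2⟩

lemma shedding_isDismissing {α : Type*} [DecidableEq α] {Δ : Set (Finset α)}
    (hΔ : IsComplex Δ) (hfin : Δ.Finite) {x : α} (hsh : IsShedding Δ x) :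
    IsDismissing Δ x := by
  have key : sInf {n : ℕ | ∃ F, IsFacet Δ F ∧ F.card = n} ≤
      sInf {n : ℕ | ∃ F, IsFacet (del Δ x) F ∧ F.card = n} := by
    by_cases hT : {n : ℕ | ∃ F, IsFacet (del Δ x) F ∧ F.card = n}.Nonempty
    · obtain ⟨G, hG, hGcard⟩ := Nat.sInf_mem hT
      -- show G is a facet of Δ
      have hxG : x ∉ G := hG.1.2
      have hGfac : IsFacet Δ G := by
        refine ⟨hG.1.1, fun H hH hGH => ?_⟩
        by_cases hxH : x ∈ H
        · exfalso
          have hins : insert x G ∈ Δ := by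
            refine hΔ H hH _ ?_
            intro a ha
            rcases Finset.mem_insert.1 ha with rfl | ha
            · exact hxH
            · exact hGH ha
          obtain ⟨F, hFfac, hsub⟩ := exists_facet_superset hfin hins
          have hxF : x ∈ F := hsub (Finset.mem_insert_self x G)
          obtain ⟨F', hF'fac, hxF', hcov⟩ := hsh F hFfac hxF
          have hF'del : F' ∈ del Δ x := ⟨hF'fac.1, hxF'⟩
          have hGF' : G ⊆ F' := by
            intro a ha
            refine hcov (Finset.mem_sdiff.2 ⟨hsub (Finset.mem_insert_of_mem ha), ?_⟩)
            simp only [Finset.mem_singleton]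
            rintro rfl
            exact hxG ha
          have hFG : F' = G := hG.2 F' hF'del hGF'
          rw [hFG] at hF'fac
          have := hF'fac.2 (insert x G) hins (Finset.subset_insert x G)
          rw [← this] at hxG
          exact hxG (Finset.mem_insert_self x G)
        · exact hG.2 H ⟨hH, hxH⟩ hGH
      exact Nat.sInf_le ⟨G, hGfac, hGcard⟩
    · -- the deletion has no facets: then Δ is empty, so neither does Δ
      have hdel : del Δ x = ∅ := by
        by_contra hne
        obtain ⟨F, hF⟩ := Set.nonempty_iff_ne_empty.2 hne
        obtain ⟨G, hGfac, _⟩ := exists_facet_superset (del_finite hfin x) hF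
        exact hT ⟨G.card, G, hGfac, rfl⟩
      have hΔe : Δ = ∅ := by
        by_contra hne
        obtain ⟨F, hF⟩ := Set.nonempty_iff_ne_empty.2 hne
        have : (∅ : Finset α) ∈ del Δ x :=
          ⟨hΔ F hF ∅ (Finset.empty_subset F), Finset.notMem_empty x⟩
        rw [hdel] at this
        exact this
      have hS : {n : ℕ | ∃ F, IsFacet Δ F ∧ F.card = n} = ∅ := by
        ext n
        simp only [Set.mem_setOf_eq, Set.mem_empty_iff_false, iff_false]
        rintro ⟨F, hF, -⟩
        rw [hΔe] at hF
        exact hF.1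
      rw [hS, Nat.sInf_empty]
      exact Nat.zero_le _
  unfold IsDismissing mdim
  omega

/-- Every vertex decomposable simplicial complex is vertex dismissible. -/
theorem vertexDecomposable_imp_vertexDismissible {α : Type*} [DecidableEq α]
    (Δ : Set (Finset α)) (hΔ : IsComplex Δ) (hfin : Δ.Finite)
    (hvd : VertexDecomposable Δ) : VertexDismissible Δ := by
  induction hvd with
  | simplex h => exact .simplex h
  | @shed Δ' x hsh hdel hlink ihdel ihlink =>
    exact .dismiss x (shedding_isDismissing hΔ hfin hsh)
      (ihdel (del_isComplex hΔ x) (del_finite hfin x))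
      (ihlink (link_isComplex hΔ x) (link_finite hfin x))
end

section
/- Every shellable simplicial complex is scalable. -/
/-- Every shellable simplicial complex is scalable. -/
theorem shellable_imp_scalable {α : Type*} [DecidableEq α] (Δ : Set (Finset α))
    (hΔ : IsComplex Δ) (hfin : Δ.Finite) (hsh : Shellable Δ) : Scalable Δ := by
  obtain ⟨q, F, hinj, hfac, hsh⟩ := hsh
  refine ⟨q, F, hinj, hfac, ?_⟩
  intro j hj
  set Δj := faceSimplex (F j) ∩ ⋃ (i : Fin q) (_ : i < j), faceSimplex (F i) with hΔj
  -- Δj is finite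
  have hfin' : Δj.Finite := by
    apply ((F j).powerset.finite_toSet).subset
    intro G hG
    simp only [Finset.coe_powerset, Set.mem_preimage, Set.mem_powerset_iff,
      Finset.coe_subset]
    exact hG.1
  -- Δj is nonempty: ∅ belongs
  have hne : Δj.Nonempty := by
    refine ⟨∅, ?_, ?_⟩
    · exact Finset.empty_subset _
    · have h0 : (⟨0, lt_of_le_of_lt (Nat.zero_le _) j.2⟩ : Fin q) < j := by
        simpa [Fin.lt_def] using hj
      exact Set.mem_biUnion h0 (Finset.empty_subset _)
  -- Δj has a facet
  obtain ⟨G₀, hG₀, hmax⟩ := hfin'.exists_maximal hne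
  have hG₀fac : IsFacet Δj G₀ := ⟨hG₀, fun G hG hsub => Finset.Subset.antisymm (hmax hG hsub) hsub⟩
  -- the set of facet cards of Δj is nonempty
  have hS : {n : ℕ | ∃ G, IsFacet Δj G ∧ G.card = n}.Nonempty :=
    ⟨G₀.card, G₀, hG₀fac, rfl⟩
  have hmem := Nat.sInf_mem hS
  obtain ⟨G₁, hG₁fac, hG₁card⟩ := hmem
  have hcard : ((sInf {n : ℕ | ∃ G, IsFacet Δj G ∧ G.card = n} : ℕ) : ℤ)
      = (F j).card - 1 := by
    rw [← hG₁card]; exact hsh j hj G₁ hG₁fac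
  have hmdimj : mdim Δj = (F j).card - 2 := by
    rw [mdim, hcard]; ring
  -- F j is a facet of Δ, so mdim Δ ≤ (F j).card - 1
  have hFj : IsFacet Δ (F j) := (hfac (F j)).2 ⟨j, rfl⟩
  have hle : (sInf {n : ℕ | ∃ G, IsFacet Δ G ∧ G.card = n} : ℕ) ≤ (F j).card :=
    Nat.sInf_le ⟨F j, hFj, rfl⟩
  rw [hmdimj, mdim]
  have : ((sInf {n : ℕ | ∃ G, IsFacet Δ G ∧ G.card = n} : ℕ) : ℤ) ≤ ((F j).card : ℤ) :=
    Int.ofNat_le.2 hle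
  omega
end

section
/- If Δ1 and Δ2 are vertex dismissible simplicial complexes on disjoint vertex sets, then their join Δ1 * Δ2 is vertex dismissible. -/
/-- The join of two complexes on disjoint vertex sets: `Δ₁ * Δ₂ = {F ∪ G : F ∈ Δ₁, G ∈ Δ₂}`. -/
def joinC {α : Type*} [DecidableEq α] (Δ₁ Δ₂ : Set (Finset α)) : Set (Finset α) :=
  {H | ∃ F ∈ Δ₁, ∃ G ∈ Δ₂, H = F ∪ G}
set_option linter.unusedSectionVars false
set_option linter.unusedVariables false
section Aux
variable {α : Type*} [DecidableEq α]

lemma vd_nonempty {Δ : Set (Finset α)} (h : VertexDismissible Δ) : Δ.Nonempty := by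
  induction h with
  | simplex h => obtain ⟨F, rfl⟩ := h; exact ⟨∅, by simp [Set.mem_setOf_eq]⟩
  | dismiss x hd hdel hlink ih1 ih2 => obtain ⟨F, hF⟩ := ih1; exact ⟨F, hF.1⟩

lemma joinC_comm (Δ₁ Δ₂ : Set (Finset α)) : joinC Δ₁ Δ₂ = joinC Δ₂ Δ₁ := by
  ext H
  constructor <;> rintro ⟨F, hF, G, hG, rfl⟩ <;>
    exact ⟨G, hG, F, hF, Finset.union_comm F G⟩

lemma simplex_join {Δ₁ Δ₂ : Set (Finset α)} (h1 : IsSimplexSet Δ₁) (h2 : IsSimplexSet Δ₂) :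
    IsSimplexSet (joinC Δ₁ Δ₂) := by
  obtain ⟨F1, rfl⟩ := h1; obtain ⟨F2, rfl⟩ := h2
  refine ⟨F1 ∪ F2, ?_⟩
  ext H
  simp only [joinC, Set.mem_setOf_eq]
  constructor
  · rintro ⟨F, hF, G, hG, rfl⟩; exact Finset.union_subset_union hF hG
  · intro h
    exact ⟨H ∩ F1, Finset.inter_subset_right, H ∩ F2, Finset.inter_subset_right, by
      rw [← Finset.inter_union_distrib_left]; exact (Finset.inter_eq_left.mpr h).symm⟩

lemma exists_facet {Δ : Set (Finset α)} (hf : Δ.Finite) {H : Finset α} (hH : H ∈ Δ) :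
    ∃ F, IsFacet Δ F ∧ H ⊆ F := by
  obtain ⟨F, hF, hmax⟩ := Set.Finite.exists_maximalFor id {G ∈ Δ | H ⊆ G}
    (hf.subset (fun G hG => hG.1)) ⟨H, hH, subset_rfl⟩
  exact ⟨F, ⟨hF.1, fun G hG hFG => Finset.Subset.antisymm (hmax ⟨hG, hF.2.trans hFG⟩ (Finset.le_iff_subset.mpr hFG)) hFG⟩, hF.2⟩

lemma isFacet_join {Δ₁ Δ₂ : Set (Finset α)}
    (hdisj : ∀ F ∈ Δ₁, ∀ G ∈ Δ₂, Disjoint F G) {F G : Finset α}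
    (hF : IsFacet Δ₁ F) (hG : IsFacet Δ₂ G) : IsFacet (joinC Δ₁ Δ₂) (F ∪ G) := by
  refine ⟨⟨F, hF.1, G, hG.1, rfl⟩, ?_⟩
  rintro H ⟨F', hF', G', hG', rfl⟩ hsub
  have h1 : F ⊆ F' := by
    intro a ha
    rcases Finset.mem_union.mp (hsub (Finset.mem_union_left _ ha)) with h | h
    · exact h
    · exact absurd h (Finset.disjoint_left.mp (hdisj F hF.1 G' hG') ha)
  have h2 : G ⊆ G' := by
    intro a ha
    rcases Finset.mem_union.mp (hsub (Finset.mem_union_right _ ha)) with h | h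
    · exact absurd h (Finset.disjoint_right.mp (hdisj F' hF' G hG.1) ha)
    · exact h
  rw [hF.2 F' hF' h1, hG.2 G' hG' h2]

lemma facet_join_decomp {Δ₁ Δ₂ : Set (Finset α)} (hf1 : Δ₁.Finite) (hf2 : Δ₂.Finite)
    {H : Finset α} (hH : IsFacet (joinC Δ₁ Δ₂) H) :
    ∃ F G, IsFacet Δ₁ F ∧ IsFacet Δ₂ G ∧ H = F ∪ G := by
  obtain ⟨⟨F, hF, G, hG, rfl⟩, hmax⟩ := hH
  obtain ⟨F1, hF1, hFF1⟩ := exists_facet hf1 hF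
  obtain ⟨G1, hG1, hGG1⟩ := exists_facet hf2 hG
  have := hmax (F1 ∪ G1) ⟨F1, hF1.1, G1, hG1.1, rfl⟩ (Finset.union_subset_union hFF1 hGG1)
  exact ⟨F1, G1, hF1, hG1, this.symm⟩

lemma mdim_join {Δ₁ Δ₂ : Set (Finset α)} (hf1 : Δ₁.Finite) (hf2 : Δ₂.Finite)
    (hdisj : ∀ F ∈ Δ₁, ∀ G ∈ Δ₂, Disjoint F G)
    (hne1 : Δ₁.Nonempty) (hne2 : Δ₂.Nonempty) :
    mdim (joinC Δ₁ Δ₂) = mdim Δ₁ + mdim Δ₂ + 1 := by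
  obtain ⟨H1, hH1⟩ := hne1
  obtain ⟨H2, hH2⟩ := hne2
  obtain ⟨F1, hF1, -⟩ := exists_facet hf1 hH1
  obtain ⟨F2, hF2, -⟩ := exists_facet hf2 hH2
  have hS1ne : {n : ℕ | ∃ F, IsFacet Δ₁ F ∧ F.card = n}.Nonempty := ⟨F1.card, F1, hF1, rfl⟩
  have hS2ne : {n : ℕ | ∃ F, IsFacet Δ₂ F ∧ F.card = n}.Nonempty := ⟨F2.card, F2, hF2, rfl⟩
  have key : sInf {n : ℕ | ∃ F, IsFacet (joinC Δ₁ Δ₂) F ∧ F.card = n}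
      = sInf {n : ℕ | ∃ F, IsFacet Δ₁ F ∧ F.card = n}
        + sInf {n : ℕ | ∃ F, IsFacet Δ₂ F ∧ F.card = n} := by
    apply le_antisymm
    · obtain ⟨G1, hG1, hc1'⟩ := Nat.sInf_mem hS1ne
      obtain ⟨G2, hG2, hc2'⟩ := Nat.sInf_mem hS2ne
      apply Nat.sInf_le
      exact ⟨G1 ∪ G2, isFacet_join hdisj hG1 hG2, by
        rw [Finset.card_union_of_disjoint (hdisj _ hG1.1 _ hG2.1), hc1', hc2']⟩
    · have hjne : {n : ℕ | ∃ F, IsFacet (joinC Δ₁ Δ₂) F ∧ F.card = n}.Nonempty :=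
        ⟨(F1 ∪ F2).card, F1 ∪ F2, isFacet_join hdisj hF1 hF2, rfl⟩
      apply le_csInf hjne
      rintro n ⟨H, hH, rfl⟩
      obtain ⟨G1, G2, hG1, hG2, rfl⟩ := facet_join_decomp hf1 hf2 hH
      rw [Finset.card_union_of_disjoint (hdisj _ hG1.1 _ hG2.1)]
      exact Nat.add_le_add (Nat.sInf_le ⟨G1, hG1, rfl⟩) (Nat.sInf_le ⟨G2, hG2, rfl⟩)
  unfold mdim
  rw [key]
  push_cast
  ring

lemma del_join {Δ₁ Δ₂ : Set (Finset α)} {x : α} (hx : ∀ G ∈ Δ₂, x ∉ G) :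
    del (joinC Δ₁ Δ₂) x = joinC (del Δ₁ x) Δ₂ := by
  ext H
  constructor
  · rintro ⟨⟨F, hF, G, hG, rfl⟩, hxH⟩
    exact ⟨F, ⟨hF, fun hxF => hxH (Finset.mem_union_left _ hxF)⟩, G, hG, rfl⟩
  · rintro ⟨F, ⟨hF, hxF⟩, G, hG, rfl⟩
    exact ⟨⟨F, hF, G, hG, rfl⟩, by simp [hxF, hx G hG]⟩

lemma link_join {Δ₁ Δ₂ : Set (Finset α)} {x : α} (hx : ∀ G ∈ Δ₂, x ∉ G) :
    link (joinC Δ₁ Δ₂) x = joinC (link Δ₁ x) Δ₂ := by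
  ext H
  constructor
  · rintro ⟨K, ⟨F, hF, G, hG, rfl⟩, hxK, rfl⟩
    have hxG : x ∉ G := hx G hG
    have hxF : x ∈ F := by
      rcases Finset.mem_union.mp hxK with h | h
      · exact h
      · exact absurd h hxG
    refine ⟨F \ {x}, ⟨F, hF, hxF, rfl⟩, G, hG, ?_⟩
    rw [Finset.union_sdiff_distrib]
    congr 1
    simp [Finset.sdiff_eq_self_iff_disjoint, Finset.disjoint_singleton_right, hxG]
  · rintro ⟨H1, ⟨F, hF, hxF, rfl⟩, G, hG, rfl⟩
    refine ⟨F ∪ G, ⟨F, hF, G, hG, rfl⟩, Finset.mem_union_left _ hxF, ?_⟩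
    rw [Finset.union_sdiff_distrib]
    congr 1
    rw [eq_comm, Finset.sdiff_eq_self_iff_disjoint]; simpa [Finset.disjoint_singleton_right] using hx G hG

lemma isComplex_del {Δ : Set (Finset α)} (hc : IsComplex Δ) (x : α) :
    IsComplex (del Δ x) := by
  rintro F ⟨hF, hxF⟩ G hG
  exact ⟨hc F hF G hG, fun h => hxF (hG h)⟩

lemma finite_del {Δ : Set (Finset α)} (hf : Δ.Finite) (x : α) : (del Δ x).Finite :=
  hf.subset (fun F hF => hF.1)

lemma isComplex_link {Δ : Set (Finset α)} (hc : IsComplex Δ) (x : α) :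
    IsComplex (link Δ x) := by
  rintro H ⟨F, hF, hxF, rfl⟩ G hG
  have hxG : x ∉ G := fun h => (Finset.mem_sdiff.mp (hG h)).2 (Finset.mem_singleton_self x)
  refine ⟨G ∪ {x}, hc F hF _ (Finset.union_subset (hG.trans Finset.sdiff_subset)
    (Finset.singleton_subset_iff.mpr hxF)), by simp, ?_⟩
  rw [Finset.union_sdiff_distrib]
  simp [Finset.sdiff_eq_self_iff_disjoint, Finset.disjoint_singleton_right, hxG]
  rw [eq_comm, Finset.sdiff_eq_self_iff_disjoint]; simpa [Finset.disjoint_singleton_right] using hxG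

lemma finite_link {Δ : Set (Finset α)} (hf : Δ.Finite) (x : α) : (link Δ x).Finite := by
  apply (hf.image (fun F => F \ {x})).subset
  rintro H ⟨F, hF, hxF, rfl⟩
  exact ⟨F, hF, rfl⟩

lemma mem_link_superset {Δ : Set (Finset α)} (hc : IsComplex Δ) {x : α} {H : Finset α}
    (hH : H ∈ link Δ x) : H ∈ Δ := by
  obtain ⟨F, hF, hxF, rfl⟩ := hH
  exact hc F hF _ Finset.sdiff_subset

lemma step_join {Δ₁ Δ₂ : Set (Finset α)} (hc1 : IsComplex Δ₁)
    (hf1 : Δ₁.Finite) (hf2 : Δ₂.Finite)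
    (hdisj : ∀ F ∈ Δ₁, ∀ G ∈ Δ₂, Disjoint F G) (hne2 : Δ₂.Nonempty)
    (x : α) (hd : IsDismissing Δ₁ x)
    (hdel_ne : (del Δ₁ x).Nonempty) (hlink_ne : (link Δ₁ x).Nonempty)
    (ih1 : VertexDismissible (joinC (del Δ₁ x) Δ₂))
    (ih2 : VertexDismissible (joinC (link Δ₁ x) Δ₂)) :
    VertexDismissible (joinC Δ₁ Δ₂) := by
  have hxF : ∃ F ∈ Δ₁, x ∈ F := by
    obtain ⟨H, F, hF, hxH, rfl⟩ := hlink_ne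
    exact ⟨F, hF, hxH⟩
  obtain ⟨F0, hF0, hxF0⟩ := hxF
  have hx2 : ∀ G ∈ Δ₂, x ∉ G := fun G hG hxG =>
    Finset.disjoint_left.mp (hdisj F0 hF0 G hG) hxF0 hxG
  have hne1 : Δ₁.Nonempty := ⟨F0, hF0⟩
  have hdisjdel : ∀ F ∈ del Δ₁ x, ∀ G ∈ Δ₂, Disjoint F G := fun F hF => hdisj F hF.1
  apply VertexDismissible.dismiss x
  · unfold IsDismissing
    rw [del_join hx2, mdim_join hf1 hf2 hdisj hne1 hne2,
        mdim_join (finite_del hf1 x) hf2 hdisjdel hdel_ne hne2]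
    have := hd
    unfold IsDismissing at this
    linarith
  · rw [del_join hx2]; exact ih1
  · rw [link_join hx2]; exact ih2

lemma join_vd_of_simplex (Δ₁ Δ₂ : Set (Finset α)) (hs : IsSimplexSet Δ₁)
    (hc1 : IsComplex Δ₁) (hf1 : Δ₁.Finite) (hc2 : IsComplex Δ₂) (hf2 : Δ₂.Finite)
    (hdisj : ∀ F ∈ Δ₁, ∀ G ∈ Δ₂, Disjoint F G)
    (h2 : VertexDismissible Δ₂) : VertexDismissible (joinC Δ₁ Δ₂) := by
  have hne1 : Δ₁.Nonempty := by
    obtain ⟨F, rfl⟩ := hs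
    exact ⟨∅, by simp [Set.mem_setOf_eq]⟩
  revert hc2 hf2 hdisj
  induction h2 with
  | @simplex Δ hs2 =>
    intro hc2 hf2 hdisj
    exact .simplex (simplex_join hs hs2)
  | @dismiss Δ x hd hdel hlink ih1 ih2 =>
    intro hc2 hf2 hdisj
    have hdisj' : ∀ F ∈ Δ, ∀ G ∈ Δ₁, Disjoint F G := fun F hF G hG => (hdisj G hG F hF).symm
    rw [joinC_comm]
    refine step_join hc2 hf2 hf1 hdisj' hne1 x hd (vd_nonempty hdel) (vd_nonempty hlink) ?_ ?_
    · rw [joinC_comm]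
      exact ih1 (isComplex_del hc2 x) (finite_del hf2 x)
        (fun F hF G hG => hdisj F hF G hG.1)
    · rw [joinC_comm]
      exact ih2 (isComplex_link hc2 x) (finite_link hf2 x)
        (fun F hF G hG => hdisj F hF G (mem_link_superset hc2 hG))

end Aux
/-- The join of two vertex dismissible complexes on disjoint vertex sets is
vertex dismissible. -/
theorem join_vertexDismissible {α : Type*} [DecidableEq α] (Δ₁ Δ₂ : Set (Finset α))
    (hc1 : IsComplex Δ₁) (hc2 : IsComplex Δ₂) (hf1 : Δ₁.Finite) (hf2 : Δ₂.Finite)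
    (hdisj : ∀ F ∈ Δ₁, ∀ G ∈ Δ₂, Disjoint F G)
    (h1 : VertexDismissible Δ₁) (h2 : VertexDismissible Δ₂) :
    VertexDismissible (joinC Δ₁ Δ₂) := by
  revert hc1 hf1 hdisj
  induction h1 with
  | @simplex Δ hs =>
    intro hc1 hf1 hdisj
    exact join_vd_of_simplex Δ Δ₂ hs hc1 hf1 hc2 hf2 hdisj h2
  | @dismiss Δ x hd hdel hlink ih1 ih2 =>
    intro hc1 hf1 hdisj
    refine step_join hc1 hf1 hf2 hdisj (vd_nonempty h2) x hd
      (vd_nonempty hdel) (vd_nonempty hlink) ?_ ?_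
    · exact ih1 (isComplex_del hc1 x) (finite_del hf1 x) (fun F hF => hdisj F hF.1)
    · exact ih2 (isComplex_link hc1 x) (finite_link hf1 x)
        (fun F hF => hdisj F (mem_link_superset hc1 hF))
end

section
/- If Δ1 and Δ2 are scalable simplicial complexes on disjoint vertex sets, then their join Δ1 * Δ2 is scalable. -/
section AuxLemmas

variable {α : Type*}

lemma aux_exists_facet_above {Δ : Set (Finset α)} (h : Δ.Finite) {F : Finset α}
    (hF : F ∈ Δ) : ∃ M, IsFacet Δ M ∧ F ⊆ M := by
  obtain ⟨M, ⟨hM, hFM⟩, hmax⟩ := Set.Finite.exists_maximalFor Finset.card {X ∈ Δ | F ⊆ X}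
    (h.subset (Set.sep_subset _ _)) ⟨F, hF, subset_rfl⟩
  refine ⟨M, ⟨hM, fun G hG hMG => ?_⟩, hFM⟩
  exact (Finset.eq_of_subset_of_card_le hMG
    (hmax (show G ∈ {X ∈ Δ | F ⊆ X} from ⟨hG, hFM.trans hMG⟩) (Finset.card_le_card hMG))).symm

lemma aux_mdim_le_facet {Δ : Set (Finset α)} {F : Finset α} (hF : IsFacet Δ F) :
    mdim Δ ≤ (F.card : ℤ) - 1 := by
  have := Nat.sInf_le (show F.card ∈ {n : ℕ | ∃ F, IsFacet Δ F ∧ F.card = n} from ⟨F, hF, rfl⟩)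
  unfold mdim; omega

lemma aux_facet_card_of_le_mdim {Δ : Set (Finset α)} {m : ℤ} (h : m ≤ mdim Δ)
    {F : Finset α} (hF : IsFacet Δ F) : m + 1 ≤ (F.card : ℤ) := by
  have := aux_mdim_le_facet hF; omega

lemma aux_le_mdim_of_forall {Δ : Set (Finset α)} {m : ℤ}
    (hne : ∃ F, IsFacet Δ F) (h : ∀ F, IsFacet Δ F → m + 1 ≤ (F.card : ℤ)) : m ≤ mdim Δ := by
  obtain ⟨F₀, hF₀⟩ := hne
  obtain ⟨F, hF, hcard⟩ := Nat.sInf_mem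
    (show {n : ℕ | ∃ F, IsFacet Δ F ∧ F.card = n}.Nonempty from ⟨F₀.card, F₀, hF₀, rfl⟩)
  have := h F hF
  unfold mdim; omega

lemma aux_exists_min_facet {Δ : Set (Finset α)} (hne : ∃ F, IsFacet Δ F) :
    ∃ F, IsFacet Δ F ∧ (F.card : ℤ) = mdim Δ + 1 := by
  obtain ⟨F₀, hF₀⟩ := hne
  obtain ⟨F, hF, hcard⟩ := Nat.sInf_mem
    (show {n : ℕ | ∃ F, IsFacet Δ F ∧ F.card = n}.Nonempty from ⟨F₀.card, F₀, hF₀, rfl⟩)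
  exact ⟨F, hF, by unfold mdim; omega⟩

lemma aux_finite_of_subset_simplex {Δ : Set (Finset α)} {F : Finset α}
    (h : ∀ G ∈ Δ, G ⊆ F) : Δ.Finite := by
  classical
  refine Set.Finite.subset (F.powerset.finite_toSet) (fun G hG => ?_)
  simpa [Finset.mem_powerset] using h G hG

lemma aux_subset_of_disjoint [DecidableEq α] {s t u : Finset α}
    (h : s ⊆ t ∪ u) (hd : Disjoint s u) : s ⊆ t := by
  intro x hx
  rcases Finset.mem_union.mp (h hx) with hx' | hx'
  · exact hx'
  · exact absurd hx' (Finset.disjoint_left.mp hd hx)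

lemma aux_nat_lex_lt {n i j k l : ℕ} (hk : k < n) (hl : l < n) :
    n * i + k < n * j + l ↔ i < j ∨ (i = j ∧ k < l) := by
  constructor
  · intro h
    rcases Nat.lt_trichotomy i j with hij | hij | hij
    · exact Or.inl hij
    · subst hij; exact Or.inr ⟨rfl, Nat.lt_of_add_lt_add_left h⟩
    · exfalso
      have h2 : n * j + l < n * i + k := by
        calc n * j + l < n * j + n := Nat.add_lt_add_left hl _
          _ = n * (j + 1) := by ring
          _ ≤ n * i := Nat.mul_le_mul_left n hij
          _ ≤ n * i + k := Nat.le_add_right _ _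
      exact absurd (h.trans h2) (lt_irrefl _)
  · rintro (hij | ⟨rfl, hkl⟩)
    · calc n * i + k < n * i + n := Nat.add_lt_add_left hk _
        _ = n * (i + 1) := by ring
        _ ≤ n * j := Nat.mul_le_mul_left n hij
        _ ≤ n * j + l := Nat.le_add_right _ _
    · exact Nat.add_lt_add_left hkl _

lemma aux_isFacet_join_iff [DecidableEq α] {Δ₁ Δ₂ : Set (Finset α)}
    (hdisj : ∀ F ∈ Δ₁, ∀ G ∈ Δ₂, Disjoint F G) {K : Finset α} :
    IsFacet (joinC Δ₁ Δ₂) K ↔ ∃ A, IsFacet Δ₁ A ∧ ∃ B, IsFacet Δ₂ B ∧ K = A ∪ B := by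
  constructor
  · rintro ⟨⟨A, hA, B, hB, rfl⟩, hmax⟩
    refine ⟨A, ⟨hA, fun A' hA' hAA' => ?_⟩, B, ⟨hB, fun B' hB' hBB' => ?_⟩, rfl⟩
    · have h1 : A' ∪ B ∈ joinC Δ₁ Δ₂ := ⟨A', hA', B, hB, rfl⟩
      have h2 : A' ∪ B = A ∪ B := hmax _ h1 (Finset.union_subset_union hAA' subset_rfl)
      have h3 : A' ⊆ A ∪ B := h2 ▸ Finset.subset_union_left
      exact (aux_subset_of_disjoint h3 (hdisj _ hA' _ hB)).antisymm hAA'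
    · have h1 : A ∪ B' ∈ joinC Δ₁ Δ₂ := ⟨A, hA, B', hB', rfl⟩
      have h2 : A ∪ B' = A ∪ B := hmax _ h1 (Finset.union_subset_union subset_rfl hBB')
      have h3 : B' ⊆ B ∪ A := by
        intro x hx
        have hx2 : x ∈ A ∪ B := h2 ▸ Finset.mem_union_right _ hx
        rw [Finset.union_comm]; exact hx2
      exact (aux_subset_of_disjoint h3 ((hdisj _ hA _ hB').symm)).antisymm hBB'
  · rintro ⟨A, hA, B, hB, rfl⟩
    refine ⟨⟨A, hA.1, B, hB.1, rfl⟩, ?_⟩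
    rintro K' ⟨A', hA', B', hB', rfl⟩ hsub
    have hAsub : A ⊆ A' := aux_subset_of_disjoint
      ((Finset.subset_union_left).trans hsub) (hdisj _ hA.1 _ hB')
    have hBsub : B ⊆ B' := by
      refine aux_subset_of_disjoint (u := A') ?_ ((hdisj _ hA' _ hB.1).symm)
      intro x hx
      have hx2 : x ∈ A' ∪ B' := hsub (Finset.mem_union_right _ hx)
      rw [Finset.union_comm]; exact hx2
    rw [hA.2 A' hA' hAsub, hB.2 B' hB' hBsub]

def pFst {q₁ q₂ : ℕ} (h : 0 < q₂) (m : Fin (q₁ * q₂)) : Fin q₁ :=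
  ⟨(m : ℕ) / q₂, (Nat.div_lt_iff_lt_mul h).mpr m.isLt⟩

def pSnd {q₁ q₂ : ℕ} (h : 0 < q₂) (m : Fin (q₁ * q₂)) : Fin q₂ :=
  ⟨(m : ℕ) % q₂, Nat.mod_lt _ h⟩

def pE {q₁ q₂ : ℕ} (i : Fin q₁) (k : Fin q₂) : Fin (q₁ * q₂) :=
  ⟨q₂ * (i : ℕ) + (k : ℕ), by
    calc q₂ * (i : ℕ) + (k : ℕ) < q₂ * (i : ℕ) + q₂ := Nat.add_lt_add_left k.isLt _
      _ = q₂ * ((i : ℕ) + 1) := by ring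
      _ ≤ q₂ * q₁ := Nat.mul_le_mul_left q₂ i.isLt
      _ = q₁ * q₂ := Nat.mul_comm _ _⟩

lemma pFst_pE {q₁ q₂ : ℕ} (h : 0 < q₂) (i : Fin q₁) (k : Fin q₂) : pFst h (pE i k) = i := by
  apply Fin.ext
  show (q₂ * (i : ℕ) + (k : ℕ)) / q₂ = i
  rw [Nat.mul_add_div h, Nat.div_eq_of_lt k.isLt]; omega

lemma pSnd_pE {q₁ q₂ : ℕ} (h : 0 < q₂) (i : Fin q₁) (k : Fin q₂) : pSnd h (pE i k) = k := by
  apply Fin.ext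
  show (q₂ * (i : ℕ) + (k : ℕ)) % q₂ = k
  rw [Nat.mul_add_mod, Nat.mod_eq_of_lt k.isLt]

lemma pE_pFst_pSnd {q₁ q₂ : ℕ} (h : 0 < q₂) (m : Fin (q₁ * q₂)) :
    pE (pFst h m) (pSnd h m) = m := by
  apply Fin.ext
  exact Nat.div_add_mod (m : ℕ) q₂

lemma pE_lt_iff {q₁ q₂ : ℕ} (i j : Fin q₁) (k l : Fin q₂) :
    pE i k < pE j l ↔ (i < j ∨ (i = j ∧ k < l)) := by
  simp only [Fin.lt_def, Fin.ext_iff]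
  exact aux_nat_lex_lt k.isLt l.isLt

lemma aux_scalable_empty : Scalable (∅ : Set (Finset α)) :=
  ⟨0, Fin.elim0, fun a => a.elim0,
    fun K => ⟨fun h => absurd h.1 (Set.notMem_empty K), fun ⟨i, _⟩ => i.elim0⟩,
    fun j => j.elim0⟩

end AuxLemmas

/-- The join of two scalable complexes on disjoint vertex sets is scalable. -/
theorem join_scalable {α : Type*} [DecidableEq α] (Δ₁ Δ₂ : Set (Finset α))
    (hc1 : IsComplex Δ₁) (hc2 : IsComplex Δ₂) (hf1 : Δ₁.Finite) (hf2 : Δ₂.Finite)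
    (hdisj : ∀ F ∈ Δ₁, ∀ G ∈ Δ₂, Disjoint F G)
    (h1 : Scalable Δ₁) (h2 : Scalable Δ₂) :
    Scalable (joinC Δ₁ Δ₂) := by
  classical
  obtain ⟨q₁, F, hFinj, hFfac, hFscal⟩ := h1
  obtain ⟨q₂, G, hGinj, hGfac, hGscal⟩ := h2
  rcases Nat.eq_zero_or_pos q₁ with hq₁ | hq₁
  · subst hq₁
    have hΔ1 : Δ₁ = ∅ := by
      by_contra h
      obtain ⟨X, hX⟩ := Set.nonempty_iff_ne_empty.mpr h
      obtain ⟨M, hM, _⟩ := aux_exists_facet_above hf1 hX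
      obtain ⟨i, _⟩ := (hFfac M).mp hM
      exact i.elim0
    have hje : joinC Δ₁ Δ₂ = ∅ := by
      ext K; simp [joinC, hΔ1]
    rw [hje]; exact aux_scalable_empty
  rcases Nat.eq_zero_or_pos q₂ with hq₂ | hq₂
  · subst hq₂
    have hΔ2 : Δ₂ = ∅ := by
      by_contra h
      obtain ⟨X, hX⟩ := Set.nonempty_iff_ne_empty.mpr h
      obtain ⟨M, hM, _⟩ := aux_exists_facet_above hf2 hX
      obtain ⟨k, _⟩ := (hGfac M).mp hM
      exact k.elim0
    have hje : joinC Δ₁ Δ₂ = ∅ := by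
      ext K; simp [joinC, hΔ2]
    rw [hje]; exact aux_scalable_empty
  -- main case
  have hdFG : ∀ (i : Fin q₁) (k : Fin q₂), Disjoint (F i) (G k) := fun i k =>
    hdisj _ ((hFfac (F i)).mpr ⟨i, rfl⟩).1 _ ((hGfac (G k)).mpr ⟨k, rfl⟩).1
  refine ⟨q₁ * q₂, fun m => F (pFst hq₂ m) ∪ G (pSnd hq₂ m), ?_, ?_, ?_⟩
  · -- injectivity
    intro m m' h
    simp only at h
    have h1 : F (pFst hq₂ m) ⊆ F (pFst hq₂ m') := by
      refine aux_subset_of_disjoint ?_ (hdFG _ (pSnd hq₂ m'))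
      rw [← h]; exact Finset.subset_union_left
    have h2 : F (pFst hq₂ m') ⊆ F (pFst hq₂ m) := by
      refine aux_subset_of_disjoint ?_ (hdFG _ (pSnd hq₂ m))
      rw [h]; exact Finset.subset_union_left
    have hfst : pFst hq₂ m = pFst hq₂ m' := hFinj (h1.antisymm h2)
    have g1 : G (pSnd hq₂ m) ⊆ G (pSnd hq₂ m') := by
      refine aux_subset_of_disjoint (u := F (pFst hq₂ m')) ?_ ((hdFG _ _).symm)
      rw [Finset.union_comm, ← h]; exact Finset.subset_union_right
    have g2 : G (pSnd hq₂ m') ⊆ G (pSnd hq₂ m) := by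
      refine aux_subset_of_disjoint (u := F (pFst hq₂ m)) ?_ ((hdFG _ _).symm)
      rw [Finset.union_comm, h]; exact Finset.subset_union_right
    have hsnd : pSnd hq₂ m = pSnd hq₂ m' := hGinj (g1.antisymm g2)
    rw [← pE_pFst_pSnd hq₂ m, ← pE_pFst_pSnd hq₂ m', hfst, hsnd]
  · -- facets
    intro K
    rw [aux_isFacet_join_iff hdisj]
    constructor
    · rintro ⟨A, hA, B, hB, rfl⟩
      obtain ⟨i, rfl⟩ := (hFfac A).mp hA
      obtain ⟨k, rfl⟩ := (hGfac B).mp hB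
      exact ⟨pE i k, by beta_reduce; rw [pFst_pE, pSnd_pE]⟩
    · rintro ⟨m, rfl⟩
      exact ⟨_, (hFfac _).mpr ⟨_, rfl⟩, _, (hGfac _).mpr ⟨_, rfl⟩, rfl⟩
  · -- scaling inequality
    intro m hm
    beta_reduce
    set j := pFst hq₂ m with hj
    set l := pSnd hq₂ m with hl
    set Γ : Set (Finset α) := faceSimplex (F j ∪ G l) ∩
      ⋃ (m' : Fin (q₁ * q₂)) (_ : m' < m),
        faceSimplex (F (pFst hq₂ m') ∪ G (pSnd hq₂ m')) with hΓ
    have hΓfin : Γ.Finite := by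
      refine aux_finite_of_subset_simplex (F := F j ∪ G l) (fun X hX => ?_)
      rw [hΓ] at hX; exact hX.1
    have hempty : (∅ : Finset α) ∈ Γ := by
      rw [hΓ]
      refine ⟨Finset.empty_subset _, ?_⟩
      refine Set.mem_iUnion.mpr ⟨⟨0, Nat.mul_pos hq₁ hq₂⟩,
        Set.mem_iUnion.mpr ⟨?_, Finset.empty_subset _⟩⟩
      exact Fin.lt_def.mpr hm
    have hΓfacet : ∃ K, IsFacet Γ K := by
      obtain ⟨M, hM, _⟩ := aux_exists_facet_above hΓfin hempty
      exact ⟨M, hM⟩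
    obtain ⟨A₀, hA₀, hA₀card⟩ := aux_exists_min_facet (Δ := Δ₁)
      ⟨F ⟨0, hq₁⟩, (hFfac _).mpr ⟨_, rfl⟩⟩
    obtain ⟨B₀, hB₀, hB₀card⟩ := aux_exists_min_facet (Δ := Δ₂)
      ⟨G ⟨0, hq₂⟩, (hGfac _).mpr ⟨_, rfl⟩⟩
    have hjoin_le : mdim (joinC Δ₁ Δ₂) ≤ mdim Δ₁ + mdim Δ₂ + 1 := by
      have hfac : IsFacet (joinC Δ₁ Δ₂) (A₀ ∪ B₀) :=
        (aux_isFacet_join_iff hdisj).mpr ⟨A₀, hA₀, B₀, hB₀, rfl⟩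
      have hle := aux_mdim_le_facet hfac
      rw [Finset.card_union_of_disjoint (hdisj _ hA₀.1 _ hB₀.1)] at hle
      push_cast at hle
      omega
    have hkey : mdim Δ₁ + mdim Δ₂ ≤ mdim Γ := by
      refine aux_le_mdim_of_forall hΓfacet ?_
      intro K hK
      have hKmem := hK.1
      rw [hΓ] at hKmem
      obtain ⟨hK1, hK2⟩ := hKmem
      have hsub : K ⊆ F j ∪ G l := hK1
      obtain ⟨m', hm'⟩ := Set.mem_iUnion.mp hK2
      obtain ⟨hm'lt, hKm'⟩ := Set.mem_iUnion.mp hm'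
      have hKm'sub : K ⊆ F (pFst hq₂ m') ∪ G (pSnd hq₂ m') := hKm'
      have hlex := (pE_lt_iff (pFst hq₂ m') j (pSnd hq₂ m') l).mp
        (by rw [pE_pFst_pSnd, hj, hl, pE_pFst_pSnd]; exact hm'lt)
      set K₁ := K ∩ F j with hK₁def
      set K₂ := K ∩ G l with hK₂def
      have hdjl : Disjoint (F j) (G l) := hdFG j l
      have hsplit : K = K₁ ∪ K₂ := by
        ext x
        rw [hK₁def, hK₂def]
        simp only [Finset.mem_union, Finset.mem_inter]
        constructor
        · intro hx
          rcases Finset.mem_union.mp (hsub hx) with h' | h'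
          · exact Or.inl ⟨hx, h'⟩
          · exact Or.inr ⟨hx, h'⟩
        · rintro (⟨hx, _⟩ | ⟨hx, _⟩) <;> exact hx
      have hdK : Disjoint K₁ K₂ :=
        hdjl.mono Finset.inter_subset_right Finset.inter_subset_right
      have hcard : K.card = K₁.card + K₂.card := by
        rw [hsplit]; exact Finset.card_union_of_disjoint hdK
      have hcast : (K.card : ℤ) = (K₁.card : ℤ) + (K₂.card : ℤ) := by exact_mod_cast hcard
      have hKmax := hK.2
      rcases hlex with hij | ⟨hij, hkl⟩
      · -- case fst m' < j
        have hmem : ∀ A : Finset α, A ⊆ F j → ∀ i' : Fin q₁, i' < j → A ⊆ F i' →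
            A ∪ G l ∈ Γ := by
          intro A hA i' hi' hAi'
          rw [hΓ]
          refine ⟨Finset.union_subset_union hA subset_rfl, ?_⟩
          refine Set.mem_iUnion.mpr ⟨pE i' l, Set.mem_iUnion.mpr ⟨?_, ?_⟩⟩
          · rw [show m = pE j l from by rw [hj, hl, pE_pFst_pSnd]]
            exact (pE_lt_iff i' j l l).mpr (Or.inl hi')
          · show A ∪ G l ⊆ F (pFst hq₂ (pE i' l)) ∪ G (pSnd hq₂ (pE i' l))
            rw [pFst_pE, pSnd_pE]
            exact Finset.union_subset_union hAi' subset_rfl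
        have hK1Fi : K₁ ⊆ F (pFst hq₂ m') := by
          intro x hx
          obtain ⟨hxK, hxFj⟩ := Finset.mem_inter.mp hx
          rcases Finset.mem_union.mp (hKm'sub hxK) with h' | h'
          · exact h'
          · exact absurd h' (Finset.disjoint_left.mp (hdFG j (pSnd hq₂ m')) hxFj)
        have hK1Fj : K₁ ⊆ F j := Finset.inter_subset_right
        have hKGl : K₁ ∪ G l = K := hKmax _ (hmem K₁ hK1Fj _ hij hK1Fi)
          (by rw [hsplit]
              exact Finset.union_subset_union subset_rfl Finset.inter_subset_right)
        have hGlK₂ : K₂ = G l := by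
          apply Finset.Subset.antisymm Finset.inter_subset_right
          intro x hx
          refine Finset.mem_inter.mpr ⟨?_, hx⟩
          rw [← hKGl]; exact Finset.mem_union_right _ hx
        set Δ₁j : Set (Finset α) := faceSimplex (F j) ∩
          ⋃ (i' : Fin q₁) (_ : i' < j), faceSimplex (F i') with hΔ₁j
        have hK₁mem : K₁ ∈ Δ₁j := by
          rw [hΔ₁j]
          exact ⟨hK1Fj, Set.mem_iUnion.mpr ⟨pFst hq₂ m', Set.mem_iUnion.mpr ⟨hij, hK1Fi⟩⟩⟩
        have hΔ₁jfin : Δ₁j.Finite := by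
          refine aux_finite_of_subset_simplex (F := F j) (fun X hX => ?_)
          rw [hΔ₁j] at hX; exact hX.1
        obtain ⟨A, hAfac, hK₁A⟩ := aux_exists_facet_above hΔ₁jfin hK₁mem
        have hAmem := hAfac.1
        rw [hΔ₁j] at hAmem
        obtain ⟨hAFj, hAiu⟩ := hAmem
        obtain ⟨i'', hi''⟩ := Set.mem_iUnion.mp hAiu
        obtain ⟨hi''lt, hAi''⟩ := Set.mem_iUnion.mp hi''
        have hAGl : A ∪ G l = K := hKmax _ (hmem A hAFj i'' hi''lt hAi'')
          (by rw [← hKGl]; exact Finset.union_subset_union hK₁A subset_rfl)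
        have hAK₁ : A = K₁ := by
          refine Finset.Subset.antisymm ?_ hK₁A
          intro x hx
          exact Finset.mem_inter.mpr
            ⟨by rw [← hAGl]; exact Finset.mem_union_left _ hx, hAFj hx⟩
        have hjpos : 0 < (j : ℕ) := Nat.lt_of_le_of_lt (Nat.zero_le _) (Fin.lt_def.mp hij)
        have hscal := hFscal j hjpos
        have hb1 : mdim Δ₁ - 1 + 1 ≤ (K₁.card : ℤ) :=
          aux_facet_card_of_le_mdim hscal (hAK₁ ▸ hAfac)
        have hb2 : mdim Δ₂ + 1 ≤ (K₂.card : ℤ) := by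
          rw [hGlK₂]
          exact aux_facet_card_of_le_mdim le_rfl ((hGfac _).mpr ⟨_, rfl⟩)
        omega
      · -- case fst m' = j, snd m' < l
        have hmem : ∀ B : Finset α, B ⊆ G l → ∀ k' : Fin q₂, k' < l → B ⊆ G k' →
            F j ∪ B ∈ Γ := by
          intro B hB k' hk' hBk'
          rw [hΓ]
          refine ⟨Finset.union_subset_union subset_rfl hB, ?_⟩
          refine Set.mem_iUnion.mpr ⟨pE j k', Set.mem_iUnion.mpr ⟨?_, ?_⟩⟩
          · rw [show m = pE j l from by rw [hj, hl, pE_pFst_pSnd]]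
            exact (pE_lt_iff j j k' l).mpr (Or.inr ⟨rfl, hk'⟩)
          · show F j ∪ B ⊆ F (pFst hq₂ (pE j k')) ∪ G (pSnd hq₂ (pE j k'))
            rw [pFst_pE, pSnd_pE]
            exact Finset.union_subset_union subset_rfl hBk'
        have hK2Gk : K₂ ⊆ G (pSnd hq₂ m') := by
          intro x hx
          obtain ⟨hxK, hxGl⟩ := Finset.mem_inter.mp hx
          rcases Finset.mem_union.mp (hKm'sub hxK) with h' | h'
          · exact absurd hxGl (Finset.disjoint_left.mp (hdFG (pFst hq₂ m') l) h')
          · exact h'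
        have hK2Gl : K₂ ⊆ G l := Finset.inter_subset_right
        have hFjK : F j ∪ K₂ = K := hKmax _ (hmem K₂ hK2Gl _ hkl hK2Gk)
          (by rw [hsplit]
              exact Finset.union_subset_union Finset.inter_subset_right subset_rfl)
        have hK₁Fj : K₁ = F j := by
          apply Finset.Subset.antisymm Finset.inter_subset_right
          intro x hx
          refine Finset.mem_inter.mpr ⟨?_, hx⟩
          rw [← hFjK]; exact Finset.mem_union_left _ hx
        set Δ₂l : Set (Finset α) := faceSimplex (G l) ∩
          ⋃ (k' : Fin q₂) (_ : k' < l), faceSimplex (G k') with hΔ₂l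
        have hK₂mem : K₂ ∈ Δ₂l := by
          rw [hΔ₂l]
          exact ⟨hK2Gl, Set.mem_iUnion.mpr ⟨pSnd hq₂ m', Set.mem_iUnion.mpr ⟨hkl, hK2Gk⟩⟩⟩
        have hΔ₂lfin : Δ₂l.Finite := by
          refine aux_finite_of_subset_simplex (F := G l) (fun X hX => ?_)
          rw [hΔ₂l] at hX; exact hX.1
        obtain ⟨B, hBfac, hK₂B⟩ := aux_exists_facet_above hΔ₂lfin hK₂mem
        have hBmem := hBfac.1
        rw [hΔ₂l] at hBmem
        obtain ⟨hBGl, hBku⟩ := hBmem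
        obtain ⟨k'', hk''⟩ := Set.mem_iUnion.mp hBku
        obtain ⟨hk''lt, hBk''⟩ := Set.mem_iUnion.mp hk''
        have hBK : F j ∪ B = K := hKmax _ (hmem B hBGl k'' hk''lt hBk'')
          (by rw [← hFjK]; exact Finset.union_subset_union subset_rfl hK₂B)
        have hBK₂ : B = K₂ := by
          refine Finset.Subset.antisymm ?_ hK₂B
          intro x hx
          exact Finset.mem_inter.mpr
            ⟨by rw [← hBK]; exact Finset.mem_union_right _ hx, hBGl hx⟩
        have hlpos : 0 < (l : ℕ) := Nat.lt_of_le_of_lt (Nat.zero_le _) (Fin.lt_def.mp hkl)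
        have hscal := hGscal l hlpos
        have hb2 : mdim Δ₂ - 1 + 1 ≤ (K₂.card : ℤ) :=
          aux_facet_card_of_le_mdim hscal (hBK₂ ▸ hBfac)
        have hb1 : mdim Δ₁ + 1 ≤ (K₁.card : ℤ) := by
          rw [hK₁Fj]
          exact aux_facet_card_of_le_mdim le_rfl ((hFfac _).mpr ⟨_, rfl⟩)
        omega
    omega
end
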